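/- Let f ∈ C¹(ℝ) and v ∈ C¹(𝕋) with |f'|_∞ |v'|_∞ Δt < 1/3, Δt ≤ 1. Define G(ξ,x) = ξ - v(x - f(ξ)Δt). Then ∂_ξ G(ξ,x) ≥ 2/3 for all (ξ,x), and for each x ∈ 𝕋 there exists a unique ξ(x) ∈ ℝ with G(ξ(x),x) = 0; hence there is a unique w : 𝕋 → ℝ with w(x) = v(x - f(w(x))Δt) for all x. -/

import Mathlib

/-!
Since `1 + v'(x - f ξ Δt) f'(ξ) Δt ≥ 1 - F V Δt > 2/3`, the residual `G(·, x) = · - v(x - f(·) Δt)`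
is strictly increasing. A continuous periodic `v` is bounded, say by `M`, so `G(-M, x) ≤ 0 ≤ G(M, x)`
and the intermediate value theorem gives a root, unique by monotonicity. The roots for the various
`x` assemble into the unique solution `w`.
-/

theorem hasDerivAt_sub_comp_sub_mul {f v : ℝ → ℝ} {f' v' : ℝ} (Δt x ξ : ℝ)
    (hf : HasDerivAt f f' ξ) (hv : HasDerivAt v v' (x - f ξ * Δt)) :
    HasDerivAt (fun ξ' => ξ' - v (x - f ξ' * Δt)) (1 + v' * f' * Δt) ξ :=
  ((hasDerivAt_id' ξ).sub (hv.comp ξ ((hf.mul_const Δt).const_sub x))).congr_deriv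
    (by ring)

theorem neg_mul_mul_le_mul_mul_of_abs_le {a b t A B : ℝ} (ha : |a| ≤ A) (hb : |b| ≤ B)
    (ht : 0 ≤ t) : -(A * B * t) ≤ b * a * t := by
  have hprod : |b * a * t| ≤ A * B * t := by
    rw [abs_mul, abs_mul, abs_of_nonneg ht, mul_comm A B]
    gcongr
    exact (abs_nonneg b).trans hb
  linarith [neg_abs_le (b * a * t)]

theorem existsUnique_sub_eq_zero_of_strictMono {h : ℝ → ℝ} {M : ℝ} (hcont : Continuous h)
    (hM : ∀ ξ, |h ξ| ≤ M) (hmono : StrictMono fun ξ => ξ - h ξ) :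
    ∃! ξ, ξ - h ξ = 0 := by
  have hM0 : 0 ≤ M := (abs_nonneg _).trans (hM 0)
  have hlow : -M - h (-M) ≤ 0 := by linarith [neg_abs_le (h (-M)), hM (-M)]
  have hhigh : 0 ≤ M - h M := by linarith [le_abs_self (h M), hM M]
  obtain ⟨ξ, -, hξ⟩ := intermediate_value_Icc (by linarith : -M ≤ M)
    (continuous_id.sub hcont).continuousOn ⟨hlow, hhigh⟩
  exact ⟨ξ, hξ, fun η hη => hmono.injective (hη.trans hξ.symm)⟩

theorem Function.Periodic.exists_abs_le_of_continuous {v : ℝ → ℝ} {c : ℝ}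
    (hper : Function.Periodic v c) (hc : c ≠ 0) (hv : Continuous v) : ∃ M, ∀ y, |v y| ≤ M := by
  obtain ⟨M, hM⟩ := isBounded_iff_forall_norm_le.mp (hper.isBounded_of_continuous hc hv)
  exact ⟨M, fun y => hM (v y) (Set.mem_range_self y)⟩

theorem existsUnique_forall_of_forall_existsUnique {α β : Sort*} {r : α → β → Prop}
    (h : ∀ a, ∃! b, r a b) : ∃! g : α → β, ∀ a, r a (g a) := by
  obtain ⟨g, hg⟩ := forall_existsUnique_iff.mp h
  exact ⟨g, fun a => hg.mpr rfl, fun g' hg' => funext fun a => (hg.mp (hg' a)).symm⟩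

theorem stmt11_general (f v : ℝ → ℝ) (Δt F V : ℝ)
    (hf : ContDiff ℝ 1 f) (hv : ContDiff ℝ 1 v) (hvper : Function.Periodic v 1)
    (hF : ∀ x, |deriv f x| ≤ F) (hV : ∀ x, |deriv v x| ≤ V)
    (hsmall : F * V * Δt < 1 / 3) (hΔt0 : 0 < Δt) :
    (∀ ξ x : ℝ, 2 / 3 ≤ deriv (fun ξ' => ξ' - v (x - f ξ' * Δt)) ξ) ∧
    (∀ x : ℝ, ∃! ξ : ℝ, ξ - v (x - f ξ * Δt) = 0) ∧
    (∃! w : ℝ → ℝ, ∀ x, w x = v (x - f (w x) * Δt)) := by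
  have hdf := hf.differentiable one_ne_zero
  have hdv := hv.differentiable one_ne_zero
  have hderiv (ξ x : ℝ) : 2 / 3 ≤ deriv (fun ξ' => ξ' - v (x - f ξ' * Δt)) ξ := by
    rw [(hasDerivAt_sub_comp_sub_mul Δt x ξ (hdf ξ).hasDerivAt (hdv _).hasDerivAt).deriv]
    linarith [neg_mul_mul_le_mul_mul_of_abs_le (hF ξ) (hV (x - f ξ * Δt)) hΔt0.le]
  obtain ⟨M, hM⟩ := hvper.exists_abs_le_of_continuous one_ne_zero hv.continuous
  have hroot (x : ℝ) : ∃! ξ : ℝ, ξ - v (x - f ξ * Δt) = 0 :=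
    existsUnique_sub_eq_zero_of_strictMono (by fun_prop) (fun ξ => hM _)
      (strictMono_of_deriv_pos fun ξ => by linarith [hderiv ξ x])
  refine ⟨hderiv, hroot, existsUnique_forall_of_forall_existsUnique
    (r := fun x ξ => ξ = v (x - f ξ * Δt)) fun x => ?_⟩
  simpa only [sub_eq_zero] using hroot x

theorem stmt11 (f v : ℝ → ℝ) (Δt F V : ℝ)
    (hf : ContDiff ℝ 1 f) (hv : ContDiff ℝ 1 v) (hvper : Function.Periodic v 1)
    (hF : ∀ x, |deriv f x| ≤ F) (hV : ∀ x, |deriv v x| ≤ V)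
    (hsmall : F * V * Δt < 1 / 3) (hΔt0 : 0 < Δt) (hΔt1 : Δt ≤ 1) :
    (∀ ξ x : ℝ, 2 / 3 ≤ deriv (fun ξ' => ξ' - v (x - f ξ' * Δt)) ξ) ∧
    (∀ x : ℝ, ∃! ξ : ℝ, ξ - v (x - f ξ * Δt) = 0) ∧
    (∃! w : ℝ → ℝ, ∀ x, w x = v (x - f (w x) * Δt)) :=
  stmt11_general f v Δt F V hf hv hvper hF hV hsmall hΔt0
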